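/- With Y = closure of Φ(X) as above, for every d ∈ ℕ the number of words of length d in the language of Y is at most 2(d+1)^3. -/

import Mathlib

open MeasureTheory Filter Topology
open scoped ENNReal

/-- The odometer map on `X = {0,1}^ℕ` (adding one with carry in binary). -/
def Tod (x : ℕ → Bool) : ℕ → Bool := fun k =>
  if ∀ i < k, x i = true then !(x k) else x k

/-- The inverse of the odometer map (subtracting one with borrow). -/
def TodInv (x : ℕ → Bool) : ℕ → Bool := fun k =>
  if ∀ i < k, x i = false then !(x k) else x k

/-- The number determined by the first `k` binary digits of `x`. -/
def DN (k : ℕ) (x : ℕ → Bool) : ℕ := ∑ i ∈ Finset.range k, 2 ^ i * (x i).toNat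

/-- The cylinder `[0^i]` of sequences starting with `i` zeros. -/
def cyl0 (i : ℕ) : Set (ℕ → Bool) := {x | ∀ j < i, x j = false}

/-- `A = ⋃_{i=5}^∞ ⋃_{j=0}^{i-1} T^j([0^i])`. -/
def Aset : Set (ℕ → Bool) := ⋃ (i : ℕ) (_ : 5 ≤ i) (j : ℕ) (_ : j < i), Tod^[j] '' cyl0 i

/-- `A_k = ⋃_{i=5}^{k} ⋃_{j=0}^{i-1} T^j([0^i])`. -/
def Ak (k : ℕ) : Set (ℕ → Bool) :=
  ⋃ (i : ℕ) (_ : 5 ≤ i) (_ : i ≤ k) (j : ℕ) (_ : j < i), Tod^[j] '' cyl0 i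

/-- `E_k = ⋃_{i=k+1}^∞ ⋃_{j=0}^{i-1} T^j([0^i])`. -/
def Ek (k : ℕ) : Set (ℕ → Bool) :=
  ⋃ (i : ℕ) (_ : k + 1 ≤ i) (j : ℕ) (_ : j < i), Tod^[j] '' cyl0 i

/-- `T^n` for `n : ℤ` (using the inverse odometer for negative `n`). -/
def zIter (n : ℤ) (x : ℕ → Bool) : ℕ → Bool :=
  if 0 ≤ n then Tod^[n.toNat] x else TodInv^[(-n).toNat] x

/-- The factor map `Φ : X → Z = {α,β}^ℤ`, with `β = true`, `α = false`:
`Φ(x)_n = β` iff `T^n(x) ∈ A`. -/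
noncomputable def Phi (x : ℕ → Bool) : ℤ → Bool := fun n =>
  @decide (zIter n x ∈ Aset) (Classical.propDecidable _)

/-- The subshift `Y`, the closure of `Φ(X)` in the full two-sided shift. -/
def Ysub : Set (ℤ → Bool) := closure (Set.range Phi)

/-- The shift map on `Z = {α,β}^ℤ`. -/
def shiftZ (z : ℤ → Bool) : ℤ → Bool := fun n => z (n + 1)

/-- The cylinder in `Z` given by a word `w` of length `n` placed at positions `0,…,n-1`. -/
def cylZ (n : ℕ) (w : Fin n → Bool) : Set (ℤ → Bool) :=
  {z | ∀ i : Fin n, z ((i : ℕ) : ℤ) = w i}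

/-! Viewing `x` as a 2-adic integer, `T^n x` lies in the level `⋃_{j<i} T^j [0^i]` of `A`
iff `(x + n) mod 2^i < i`. Choose `s` with `d ≤ 2^s ≤ 2(d+1)`. On the window `0 ≤ n < d` the
levels `i ≤ s` only see `x mod 2^s`. A level `i > s` contributes an initial segment of the window
and a segment starting at the entry time of `x` into `[0^i]`; every such entry time inside the
window equals the entry time into `[0^s]`, again a function of `x mod 2^s`. So the levels `i > s`
fill `[0, a) ∪ [b, e)` with `b` fixed by `x mod 2^s`, and a word of `Y` (a word of some `Φ x`,
cylinders being open) is determined by `(x mod 2^s, a, e)`: at most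
`2^s (d+1)^2 ≤ 2(d+1)^3` words. -/

lemma DN_succ (i : ℕ) (x : ℕ → Bool) : DN (i + 1) x = DN i x + 2 ^ i * (x i).toNat :=
  Finset.sum_range_succ _ _

lemma DN_lt (i : ℕ) (x : ℕ → Bool) : DN i x < 2 ^ i := by
  induction i with
  | zero => simp [DN]
  | succ i ih => cases hxi : x i <;> simp [DN_succ, hxi, pow_succ] <;> omega

lemma DN_eq_zero_iff (i : ℕ) (x : ℕ → Bool) : DN i x = 0 ↔ ∀ j < i, x j = false := by
  induction i with
  | zero => simp [DN]
  | succ i ih =>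
    rw [DN_succ, Nat.forall_lt_succ_right, ← ih]
    cases x i <;> simp

lemma DN_mod_two_pow (x : ℕ → Bool) {i j : ℕ} (h : i ≤ j) : DN j x % 2 ^ i = DN i x := by
  induction j, h using Nat.le_induction with
  | base => exact Nat.mod_eq_of_lt (DN_lt i x)
  | succ j hij ih =>
    obtain ⟨c, hc⟩ : 2 ^ i ∣ 2 ^ j * (x j).toNat := (pow_dvd_pow 2 hij).mul_right _
    rw [DN_succ, hc, Nat.add_mul_mod_self_left, ih]

lemma DN_Tod_add (i : ℕ) (x : ℕ → Bool) :
    DN i (Tod x) + (if ∀ j < i, x j = true then 2 ^ i else 0) = DN i x + 1 := by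
  induction i with
  | zero => simp [DN]
  | succ i ih =>
    have hTod : Tod x i = if ∀ j < i, x j = true then !(x i) else x i := rfl
    rw [DN_succ, DN_succ, hTod]
    by_cases h : ∀ j < i, x j = true
    · have hsucc : (∀ j < i + 1, x j = true) ↔ x i = true := by
        rw [Nat.forall_lt_succ_right, and_iff_right h]
      rw [if_pos h] at ih ⊢
      simp only [hsucc]
      cases x i <;> simp [pow_succ] <;> omega
    · have hsucc : ¬∀ j < i + 1, x j = true := fun h' => h fun j hj => h' j (by omega)
      rw [if_neg h] at ih
      rw [if_neg h, if_neg hsucc]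
      omega

lemma DN_Tod (i : ℕ) (x : ℕ → Bool) : DN i (Tod x) = (DN i x + 1) % 2 ^ i := by
  rw [← DN_Tod_add]
  split_ifs <;> simp [Nat.mod_eq_of_lt (DN_lt i _)]

lemma DN_iterate_Tod (i n : ℕ) (x : ℕ → Bool) : DN i (Tod^[n] x) = (DN i x + n) % 2 ^ i := by
  induction n with
  | zero => simp [Nat.mod_eq_of_lt (DN_lt i x)]
  | succ n ih => rw [Function.iterate_succ_apply', DN_Tod, ih, Nat.mod_add_mod, add_assoc]

lemma forall_lt_TodInv_eq_true_iff (k : ℕ) (x : ℕ → Bool) :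
    (∀ i < k, TodInv x i = true) ↔ ∀ i < k, x i = false := by
  induction k with
  | zero => simp
  | succ k ih =>
    have hInv : TodInv x k = if ∀ i < k, x i = false then !(x k) else x k := rfl
    rw [Nat.forall_lt_succ_right, Nat.forall_lt_succ_right, ih, hInv]
    by_cases h : ∀ i < k, x i = false <;> simp [h]

lemma Tod_TodInv (x : ℕ → Bool) : Tod (TodInv x) = x := by
  funext k
  have hInv : TodInv x k = if ∀ i < k, x i = false then !(x k) else x k := rfl
  show (if ∀ i < k, TodInv x i = true then !(TodInv x k) else TodInv x k) = x k
  simp only [forall_lt_TodInv_eq_true_iff, hInv]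
  split_ifs <;> simp

lemma mem_iterate_Tod_image_cyl0_iff {i j : ℕ} (hj : j < 2 ^ i) (y : ℕ → Bool) :
    y ∈ Tod^[j] '' cyl0 i ↔ DN i y = j := by
  constructor
  · rintro ⟨u, hu, rfl⟩
    rw [DN_iterate_Tod, (DN_eq_zero_iff i u).2 hu, zero_add, Nat.mod_eq_of_lt hj]
  · intro hy
    set u := TodInv^[j] y
    have hTu : Tod^[j] u = y := (Function.LeftInverse.iterate Tod_TodInv j) y
    have hu : (DN i u + j) % 2 ^ i = j := by rw [← DN_iterate_Tod, hTu, hy]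
    have hu0 : DN i u = 0 := by
      have := DN_lt i u
      rcases lt_or_ge (DN i u + j) (2 ^ i) with h | h
      · rw [Nat.mod_eq_of_lt h] at hu
        omega
      · rw [Nat.mod_eq_sub_mod h, Nat.mod_eq_of_lt (by omega)] at hu
        omega
    exact ⟨u, (DN_eq_zero_iff i u).1 hu0, hTu⟩

lemma mem_Aset_iff (y : ℕ → Bool) : y ∈ Aset ↔ ∃ i, 5 ≤ i ∧ DN i y < i := by
  simp only [Aset, Set.mem_iUnion]
  constructor
  · rintro ⟨i, h5, j, hj, hy⟩
    rw [mem_iterate_Tod_image_cyl0_iff (hj.trans i.lt_two_pow_self)] at hy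
    exact ⟨i, h5, hy ▸ hj⟩
  · rintro ⟨i, h5, hy⟩
    exact ⟨i, h5, DN i y, hy, (mem_iterate_Tod_image_cyl0_iff (DN_lt i y) y).2 rfl⟩

lemma Phi_natCast_eq_true_iff (x : ℕ → Bool) (n : ℕ) :
    Phi x n = true ↔ ∃ i, 5 ≤ i ∧ (DN i x + n) % 2 ^ i < i := by
  have hz : zIter n x = Tod^[n] x := by
    rw [zIter, if_pos (Int.natCast_nonneg n), Int.toNat_natCast]
  simp only [Phi, decide_eq_true_eq, hz, mem_Aset_iff, DN_iterate_Tod]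

/-- The number of odometer steps `x` needs to enter the cylinder `[0^i]`. -/
def entryTime (i : ℕ) (x : ℕ → Bool) : ℕ := (2 ^ i - DN i x) % 2 ^ i

lemma entryTime_mod_two_pow (x : ℕ → Bool) {i j : ℕ} (h : i ≤ j) :
    entryTime j x % 2 ^ i = entryTime i x := by
  have hdvd : 2 ^ i ∣ 2 ^ j := pow_dvd_pow 2 h
  rw [entryTime, entryTime, Nat.mod_mod_of_dvd _ hdvd]
  refine Nat.ModEq.add_right_cancel' (DN j x) ?_
  have hDN : DN j x ≡ DN i x [MOD 2 ^ i] := by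
    rw [Nat.ModEq, DN_mod_two_pow x h, Nat.mod_eq_of_lt (DN_lt i x)]
  calc 2 ^ j - DN j x + DN j x = 2 ^ j := Nat.sub_add_cancel (DN_lt j x).le
    _ ≡ 2 ^ i [MOD 2 ^ i] :=
      (Nat.modEq_zero_iff_dvd.2 hdvd).trans (Nat.modEq_zero_iff_dvd.2 dvd_rfl).symm
    _ = 2 ^ i - DN i x + DN i x := (Nat.sub_add_cancel (DN_lt i x).le).symm
    _ ≡ 2 ^ i - DN i x + DN j x [MOD 2 ^ i] := Nat.ModEq.add_left _ hDN.symm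

lemma add_mod_lt_iff {m n N L : ℕ} (hm : m < N) (hn : n < N) :
    (m + n) % N < L ↔
      ((N - m) % N ≤ n ∧ n < (N - m) % N + L) ∨ n + N < (N - m) % N + L := by
  rcases Nat.eq_zero_or_pos m with rfl | hm0
  · rw [Nat.sub_zero, Nat.mod_self, zero_add, Nat.mod_eq_of_lt hn]
    omega
  · rw [Nat.mod_eq_of_lt (show N - m < N by omega)]
    rcases lt_or_ge (m + n) N with h | h
    · rw [Nat.mod_eq_of_lt h]
      omega
    · rw [Nat.mod_eq_sub_mod h, Nat.mod_eq_of_lt (by omega)]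
      omega

/-- As `d ≤ 2 ^ s`, an entry time into `[0^i]`, `i ≥ s`, that falls in the window `[0, d)` is
the entry time into `[0^s]`. -/
lemma DN_add_mod_lt_iff {d s i n : ℕ} (x : ℕ → Bool) (hd : d ≤ 2 ^ s) (hi : s ≤ i)
    (hn : n < d) :
    (DN i x + n) % 2 ^ i < i ↔ n + 2 ^ i < entryTime i x + i ∨
      (entryTime s x ≤ n ∧ entryTime i x < d ∧ n < entryTime i x + i) := by
  have hsi : 2 ^ s ≤ 2 ^ i := Nat.pow_le_pow_right two_pos hi
  have hentry : entryTime i x < d → entryTime i x = entryTime s x := fun h => by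
    rw [← entryTime_mod_two_pow x hi, Nat.mod_eq_of_lt (by omega)]
  rw [add_mod_lt_iff (DN_lt i x) (by omega), ← entryTime]
  constructor
  · rintro (⟨h1, h2⟩ | h)
    · exact Or.inr ⟨(hentry (by omega)) ▸ h1, by omega, h2⟩
    · exact Or.inl h
  · rintro (h | ⟨h1, h2, h3⟩)
    · exact Or.inr h
    · exact Or.inl ⟨(hentry h2).symm ▸ h1, h3⟩

lemma Antitone.exists_le_forall_iff_lt {P : ℕ → Prop} (hP : Antitone P) (d : ℕ) :
    ∃ a ≤ d, ∀ n < d, P n ↔ n < a := by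
  rcases IsLowerSet.eq_univ_or_Iio (s := {n | P n}) (fun _ _ hba ha => hP hba ha) with h | ⟨a, h⟩
  · exact ⟨d, le_rfl, fun n hn => iff_of_true (Set.eq_univ_iff_forall.1 h n) hn⟩
  · exact ⟨min a d, min_le_right a d, fun n hn => by simpa [hn] using Set.ext_iff.1 h n⟩

lemma exists_large_levels_iff {d s : ℕ} (x : ℕ → Bool) (hd : d ≤ 2 ^ s) :
    ∃ a ≤ d, ∃ e ≤ d, ∀ n < d,
      (∃ i, 5 ≤ i ∧ s < i ∧ (DN i x + n) % 2 ^ i < i) ↔ n < a ∨ (entryTime s x ≤ n ∧ n < e) := by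
  obtain ⟨a, had, ha⟩ := Antitone.exists_le_forall_iff_lt (P := fun n =>
    ∃ i, 5 ≤ i ∧ s < i ∧ n + 2 ^ i < entryTime i x + i)
    (fun _ _ hmn ⟨i, h5, hsi, h⟩ => ⟨i, h5, hsi, by omega⟩) d
  obtain ⟨e, hed, he⟩ := Antitone.exists_le_forall_iff_lt (P := fun n =>
    ∃ i, 5 ≤ i ∧ s < i ∧ entryTime i x < d ∧ n < entryTime i x + i)
    (fun _ _ hmn ⟨i, h5, hsi, hd', h⟩ => ⟨i, h5, hsi, hd', by omega⟩) d
  refine ⟨a, had, e, hed, fun n hn => ?_⟩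
  rw [← ha n hn, ← he n hn]
  constructor
  · rintro ⟨i, h5, hsi, hi⟩
    rcases (DN_add_mod_lt_iff x hd hsi.le hn).1 hi with h | ⟨h1, h2, h3⟩
    · exact Or.inl ⟨i, h5, hsi, h⟩
    · exact Or.inr ⟨h1, i, h5, hsi, h2, h3⟩
  · rintro (⟨i, h5, hsi, h⟩ | ⟨h1, i, h5, hsi, h2, h3⟩)
    · exact ⟨i, h5, hsi, (DN_add_mod_lt_iff x hd hsi.le hn).2 (Or.inl h)⟩
    · exact ⟨i, h5, hsi, (DN_add_mod_lt_iff x hd hsi.le hn).2 (Or.inr ⟨h1, h2, h3⟩)⟩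

/-- The word of length `d` with offset `c` modulo `2 ^ s` and cut positions `a`, `e`. -/
def codedWord (s d c a e : ℕ) (n : Fin d) : Bool :=
  decide ((∃ i ∈ (Finset.Icc 5 s : Finset ℕ), (c + n) % 2 ^ i < i) ∨ n < a ∨
    ((2 ^ s - c) % 2 ^ s ≤ n ∧ n < e))

lemma exists_Phi_eq_codedWord {d s : ℕ} (x : ℕ → Bool) (hd : d ≤ 2 ^ s) :
    ∃ a ≤ d, ∃ e ≤ d, ∀ n : Fin d, Phi x n = codedWord s d (DN s x) a e n := by
  obtain ⟨a, had, e, hed, hae⟩ := exists_large_levels_iff x hd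
  refine ⟨a, had, e, hed, fun n => Bool.eq_iff_iff.2 ?_⟩
  have hsmall : ∀ i ≤ s, (DN s x + n) % 2 ^ i = (DN i x + n) % 2 ^ i := fun i hi => by
    rw [Nat.add_mod, DN_mod_two_pow x hi, Nat.add_mod_mod]
  rw [Phi_natCast_eq_true_iff, codedWord, decide_eq_true_eq, ← entryTime, ← hae n n.isLt]
  constructor
  · rintro ⟨i, h5, hi⟩
    rcases le_or_gt i s with his | hsi
    · exact Or.inl ⟨i, Finset.mem_Icc.2 ⟨h5, his⟩, hsmall i his ▸ hi⟩
    · exact Or.inr ⟨i, h5, hsi, hi⟩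
  · rintro (⟨i, hi, h⟩ | ⟨i, h5, -, h⟩)
    · obtain ⟨h5, his⟩ := Finset.mem_Icc.1 hi
      exact ⟨i, h5, hsmall i his ▸ h⟩
    · exact ⟨i, h5, h⟩

lemma exists_apply_eq_of_mem_closure_range {ι α β : Type*} [TopologicalSpace α]
    [DiscreteTopology α] {f : β → ι → α} {z : ι → α} (hz : z ∈ closure (Set.range f))
    {s : Set ι} (hs : s.Finite) : ∃ b, ∀ i ∈ s, f b i = z i := by
  have hU : IsOpen {y : ι → α | ∀ i ∈ s, y i = z i} := by
    simp only [← Set.mem_singleton_iff, ← Set.mem_preimage, Set.ofPred_forall]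
    exact hs.isOpen_biInter fun i _ => (isOpen_discrete _).preimage (continuous_apply i)
  obtain ⟨_, hy, b, rfl⟩ := mem_closure_iff.1 hz _ hU fun _ _ => rfl
  exact ⟨b, hy⟩

lemma ncard_language_Ysub_le {d s : ℕ} (hd : d ≤ 2 ^ s) :
    {w : Fin d → Bool | ∃ z ∈ Ysub, ∀ i : Fin d, z ((i : ℕ) : ℤ) = w i}.ncard
      ≤ 2 ^ s * (d + 1) ^ 2 := by
  set T := Finset.range (2 ^ s) ×ˢ Finset.range (d + 1) ×ˢ Finset.range (d + 1)
  have hsub : {w : Fin d → Bool | ∃ z ∈ Ysub, ∀ i : Fin d, z ((i : ℕ) : ℤ) = w i} ⊆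
      T.image fun p => codedWord s d p.1 p.2.1 p.2.2 := by
    rintro w ⟨z, hz, hw⟩
    obtain ⟨x, hx⟩ := exists_apply_eq_of_mem_closure_range hz
      (Set.finite_range fun i : Fin d => ((i : ℕ) : ℤ))
    obtain ⟨a, had, e, hed, hae⟩ := exists_Phi_eq_codedWord x hd
    refine Finset.mem_image.2 ⟨(DN s x, a, e), ?_, funext fun n => ?_⟩
    · simp only [T, Finset.mem_product, Finset.mem_range]
      exact ⟨DN_lt s x, by omega, by omega⟩
    · rw [← hae n, hx _ ⟨n, rfl⟩, hw]
  calc _ ≤ (T.image fun p => codedWord s d p.1 p.2.1 p.2.2).card := by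
        rw [← Set.ncard_coe_finset]
        exact Set.ncard_le_ncard hsub
    _ ≤ T.card := Finset.card_image_le
    _ = 2 ^ s * (d + 1) ^ 2 := by simp [T, sq]

/-- the number of words of length `d` in the language of `Y` is at most
`2(d+1)^3`. -/
theorem stmt12 (d : ℕ) :
    {w : Fin d → Bool | ∃ z ∈ Ysub, ∀ i : Fin d, z ((i : ℕ) : ℤ) = w i}.ncard
      ≤ 2 * (d + 1) ^ 3 := by
  have hd : d ≤ 2 ^ (Nat.log 2 d + 1) := (Nat.lt_pow_succ_log_self one_lt_two d).le
  have hpow : 2 ^ (Nat.log 2 d + 1) ≤ 2 * (d + 1) := by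
    rw [pow_succ, mul_comm]
    exact Nat.mul_le_mul_left 2 (Nat.pow_log_le_add_one 2 d)
  calc _ ≤ 2 ^ (Nat.log 2 d + 1) * (d + 1) ^ 2 := ncard_language_Ysub_le hd
    _ ≤ 2 * (d + 1) * (d + 1) ^ 2 := Nat.mul_le_mul_right _ hpow
    _ = 2 * (d + 1) ^ 3 := by ring
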